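/- Let $s \in \mathbb{N}$ and $\nu \in \mathbb{N}_0^s$ be a multi-index. Then $\sum_{m \le \nu,\ m \ne \nu} \binom{\nu}{m}\, \frac{(|m|+1)!}{(\ln 2)^{|m|}} \le \frac{(|\nu|+1)!}{(\ln 2)^{|\nu|}}$, where the sum is over all multi-indices $m \in \mathbb{N}_0^s$ with $m_j \le \nu_j$ for all $j$ and $m \ne \nu$. -/

import Mathlib

/-!
Comparing coefficients in `∏ⱼ (1 + X) ^ νⱼ = (1 + X) ^ |ν|` (multivariate Vandermonde) collapses
the sum over multi-indices `m ≤ ν` to the one-variable sum over `k = |m|`, weighted by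
`(|ν| choose k)`. With `x = ln 2`, the `k`-th term is at most `(|ν| + 1)! / x ^ |ν|` times
`x ^ (|ν| - k) / (|ν| - k)!`, and these factors add up to at most `exp x - 1 = 1`.
-/

open Finset Polynomial Nat Real

section Vandermonde

variable {ι : Type*} [Fintype ι] [DecidableEq ι]

theorem prod_X_add_one_pow_eq_sum_Iic (ν : ι → ℕ) :
    ∏ j, (X + 1 : ℕ[X]) ^ ν j = ∑ m ∈ Iic ν, C (∏ j, (ν j).choose (m j)) * X ^ ∑ j, m j := by
  simp_rw [add_pow, one_pow, mul_one, prod_univ_sum]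
  refine sum_congr (by ext; simp [Pi.le_def]) fun m _ => ?_
  rw [prod_mul_distrib, prod_pow_eq_pow_sum, map_prod, mul_comm]
  simp

theorem sum_Iic_filter_prod_choose (ν : ι → ℕ) (k : ℕ) :
    ∑ m ∈ Iic ν with ∑ j, m j = k, ∏ j, (ν j).choose (m j) = (∑ j, ν j).choose k := by
  have hcoeff := congrArg (coeff · k) (prod_X_add_one_pow_eq_sum_Iic ν)
  simp only [prod_pow_eq_pow_sum, coeff_X_add_one_pow, finsetSum_coeff, coeff_C_mul_X_pow,
    Nat.cast_id] at hcoeff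
  rw [hcoeff, sum_filter]
  simp_rw [eq_comm]

theorem sum_Iic_prod_choose_mul {R : Type*} [CommSemiring R] (ν : ι → ℕ) (g : ℕ → R) :
    ∑ m ∈ Iic ν, (∏ j, ((ν j).choose (m j) : R)) * g (∑ j, m j)
      = ∑ k ∈ range (∑ j, ν j + 1), ((∑ j, ν j).choose k : R) * g k := by
  have hmaps : ∀ m ∈ Iic ν, ∑ j, m j ∈ range (∑ j, ν j + 1) := fun m hm =>
    mem_range_succ_iff.mpr (sum_le_sum fun j _ => mem_Iic.mp hm j)
  rw [← sum_fiberwise_of_maps_to hmaps]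
  refine sum_congr rfl fun k _ => ?_
  rw [← sum_Iic_filter_prod_choose ν k, Nat.cast_sum, sum_mul]
  refine sum_congr rfl fun m hm => ?_
  rw [(mem_filter.mp hm).2, Nat.cast_prod]

end Vandermonde

theorem sum_range_pow_sub_div_factorial_le {x : ℝ} (hx : 0 ≤ x) (n : ℕ) :
    ∑ k ∈ range n, x ^ (n - k) / (n - k)! ≤ exp x - 1 := by
  have hexp := sum_le_exp_of_nonneg hx (n + 1)
  rw [← sum_range_reflect, sum_range_succ] at hexp
  simp only [Nat.add_sub_cancel, Nat.sub_self, pow_zero, factorial_zero, cast_one,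
    div_one] at hexp
  linarith

theorem choose_mul_factorial_succ_div_pow_le {x : ℝ} (hx : 0 < x) {n k : ℕ} (hk : k ≤ n) :
    n.choose k * ((k + 1)! : ℝ) / x ^ k ≤ (n + 1)! / x ^ n * (x ^ (n - k) / (n - k)!) := by
  have hchoose : (n.choose k : ℝ) * k ! * (n - k)! = n ! := by
    exact_mod_cast choose_mul_factorial_mul_factorial hk
  have hpow : x ^ n = x ^ k * x ^ (n - k) := by rw [← pow_add, Nat.add_sub_cancel' hk]
  rw [hpow, factorial_succ, factorial_succ]
  push_cast
  rw [← hchoose]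
  field_simp
  gcongr

theorem sum_range_choose_mul_factorial_succ_div_pow_le {x : ℝ} (hx : 0 < x) (n : ℕ) :
    ∑ k ∈ range n, n.choose k * ((k + 1)! : ℝ) / x ^ k ≤ (n + 1)! / x ^ n * (exp x - 1) :=
  calc ∑ k ∈ range n, n.choose k * ((k + 1)! : ℝ) / x ^ k
      ≤ ∑ k ∈ range n, (n + 1)! / x ^ n * (x ^ (n - k) / (n - k)!) :=
        sum_le_sum fun k hk => choose_mul_factorial_succ_div_pow_le hx (mem_range.mp hk).le
    _ = (n + 1)! / x ^ n * ∑ k ∈ range n, x ^ (n - k) / (n - k)! := (mul_sum ..).symm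
    _ ≤ (n + 1)! / x ^ n * (exp x - 1) := by
        gcongr
        exact sum_range_pow_sub_div_factorial_le hx.le n

/-- Multi-index estimate (equation (counting3) in the paper):
`∑_{m ≤ ν, m ≠ ν} (ν choose m) * (|m|+1)! / (ln 2)^{|m|} ≤ (|ν|+1)! / (ln 2)^{|ν|}`,
where the sum is over all multi-indices `m : Fin s → ℕ` with `m ≤ ν` and `m ≠ ν`. -/
theorem sum_multichoose_factorial_succ_log2_le (s : ℕ) (ν : Fin s → ℕ) :
    ∑ m ∈ (Finset.Iic ν).erase ν,
        (∏ j, (Nat.choose (ν j) (m j) : ℝ)) *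
          (Nat.factorial ((∑ j, m j) + 1) : ℝ) / Real.log 2 ^ (∑ j, m j)
      ≤ (Nat.factorial ((∑ j, ν j) + 1) : ℝ) / Real.log 2 ^ (∑ j, ν j) := by
  have hsum := sum_Iic_prod_choose_mul ν fun k => ((k + 1)! : ℝ) / Real.log 2 ^ k
  rw [← sum_erase_add _ _ (mem_Iic.mpr le_rfl), sum_range_succ] at hsum
  simp only [choose_self, cast_one, prod_const_one, one_mul, add_left_inj] at hsum
  simp_rw [mul_div_assoc, hsum, ← mul_div_assoc]
  refine (sum_range_choose_mul_factorial_succ_div_pow_le (log_pos one_lt_two) _).trans_eq ?_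
  rw [exp_log two_pos]
  norm_num
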